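/- (Projective cross law) Suppose U, V, W are nonzero vectors with a_U, a_V, a_W all nonzero, and with a_U·a_W − b_{UW}² ≠ 0 and a_V·a_W − b_{VW}² ≠ 0. Then the projective quadrances q_u = q(V,W), q_v = q(U,W), q_w = q(U,V) and the projective spread S_w satisfy (S_w·q_u·q_v − q_u − q_v − q_w + 2)² = 4(1 − q_u)(1 − q_v)(1 − q_w). -/
import Mathlib


set_option maxHeartbeats 2000000 in
private theorem aux {F : Type*} [Field F]
    (aU aV aW p q r : F)
    (haU : aU ≠ 0) (haV : aV ≠ 0) (haW : aW ≠ 0)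
    (hdUW : aU * aW - q ^ 2 ≠ 0)
    (hdVW : aV * aW - r ^ 2 ≠ 0) :
    (1 - (aW * p - q * r) ^ 2 / ((aU * aW - q ^ 2) * (aV * aW - r ^ 2))) *
        (1 - r ^ 2 / (aV * aW)) * (1 - q ^ 2 / (aU * aW)) -
        (1 - r ^ 2 / (aV * aW)) - (1 - q ^ 2 / (aU * aW)) - (1 - p ^ 2 / (aU * aV)) + 2
      = 2 * p * q * r / (aU * aV * aW) := by
  have hvw : aV * aW ≠ 0 := mul_ne_zero haV haW
  have huw : aU * aW ≠ 0 := mul_ne_zero haU haW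
  have huv : aU * aV ≠ 0 := mul_ne_zero haU haV
  have h2 : 1 - r ^ 2 / (aV * aW) = (aV * aW - r ^ 2) / (aV * aW) := by
    rw [one_sub_div hvw]
  have h3 : 1 - q ^ 2 / (aU * aW) = (aU * aW - q ^ 2) / (aU * aW) := by
    rw [one_sub_div huw]
  have h1 : 1 - (aW * p - q * r) ^ 2 / ((aU * aW - q ^ 2) * (aV * aW - r ^ 2)) =
      ((aU * aW - q ^ 2) * (aV * aW - r ^ 2) - (aW * p - q * r) ^ 2) /
        ((aU * aW - q ^ 2) * (aV * aW - r ^ 2)) := by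
    rw [one_sub_div (mul_ne_zero hdUW hdVW)]
  rw [h1, h2, h3]
  have key : ((aU * aW - q ^ 2) * (aV * aW - r ^ 2) - (aW * p - q * r) ^ 2) /
        ((aU * aW - q ^ 2) * (aV * aW - r ^ 2)) *
        ((aV * aW - r ^ 2) / (aV * aW)) * ((aU * aW - q ^ 2) / (aU * aW)) =
      ((aU * aW - q ^ 2) * (aV * aW - r ^ 2) - (aW * p - q * r) ^ 2) /
        ((aU * aW) * (aV * aW)) := by
    rw [div_mul_div_comm, div_mul_div_comm, div_eq_div_iff]
    · ring
    · exact mul_ne_zero (mul_ne_zero (mul_ne_zero hdUW hdVW) hvw) huw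
    · exact mul_ne_zero huw hvw
  rw [key, one_sub_div huv]
  have n1 : aU * aW * (aV * aW) ≠ 0 := mul_ne_zero huw hvw
  have n2 : aU * aW * (aV * aW) * (aV * aW) ≠ 0 := mul_ne_zero n1 hvw
  have n3 : aU * aW * (aV * aW) * (aV * aW) * (aU * aW) ≠ 0 := mul_ne_zero n2 huw
  have n4 : aU * aW * (aV * aW) * (aV * aW) * (aU * aW) * (aU * aV) ≠ 0 :=
    mul_ne_zero n3 huv
  rw [div_sub_div _ _ n1 hvw, div_sub_div _ _ n2 huw, div_sub_div _ _ n3 huv,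
    div_add' _ _ _ n4, div_eq_div_iff n4 (mul_ne_zero huv haW)]
  ring



/-- The projective quadrance between the projective points `[U]` and `[V]`. -/
def projQuadrance {F : Type*} [Field F] {M : Type*} [AddCommGroup M] [Module F M]
    (B : LinearMap.BilinForm F M) (U V : M) : F :=
  1 - (B U V) ^ 2 / (B U U * B V V)

/-- The projective spread between the projective lines `WU` and `WV`
(the spread at the vertex `[W]`). -/
def projSpread {F : Type*} [Field F] {M : Type*} [AddCommGroup M] [Module F M]
    (B : LinearMap.BilinForm F M) (W U V : M) : F :=
  1 - (B W W * B U V - B U W * B V W) ^ 2 /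
      ((B U U * B W W - (B U W) ^ 2) * (B V V * B W W - (B V W) ^ 2))

theorem projective_cross_law
    {F : Type*} [Field F] (hchar : (2 : F) ≠ 0)
    {M : Type*} [AddCommGroup M] [Module F M]
    (B : LinearMap.BilinForm F M) (hsym : ∀ x y : M, B x y = B y x)
    (U V W : M) (hU : U ≠ 0) (hV : V ≠ 0) (hW : W ≠ 0)
    (haU : B U U ≠ 0) (haV : B V V ≠ 0) (haW : B W W ≠ 0)
    (hdUW : B U U * B W W - (B U W) ^ 2 ≠ 0)
    (hdVW : B V V * B W W - (B V W) ^ 2 ≠ 0) :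
    (projSpread B W U V * projQuadrance B V W * projQuadrance B U W -
        projQuadrance B V W - projQuadrance B U W - projQuadrance B U V + 2) ^ 2 =
      4 * (1 - projQuadrance B V W) * (1 - projQuadrance B U W) *
        (1 - projQuadrance B U V) := by
  have h := aux (B U U) (B V V) (B W W) (B U V) (B U W) (B V W) haU haV haW hdUW hdVW
  simp only [projSpread, projQuadrance] at h ⊢
  rw [hsym V W, hsym U W] at h ⊢
  rw [h, sub_sub_cancel, sub_sub_cancel, sub_sub_cancel]
  field_simp
  ring
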